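/- Let A be a large subalgebra of the pseudo MV-algebra B = Γ(G,u) and suppose B is strongly projectable. Let (M_i)_{i∈J} be the family of all strongly projectable subalgebras of B containing A, and set M = ⋂_{i∈J} M_i. Then M is a strongly projectable subalgebra of B containing A. -/

import Mathlib

variable {G : Type*} [Lattice G] [AddGroup G]
  [CovariantClass G G (· + ·) (· ≤ ·)]
  [CovariantClass G G (Function.swap (· + ·)) (· ≤ ·)]

/-- `u` is a strong unit of the lattice-ordered group `G`. -/
def IsStrongUnit (u : G) : Prop := 0 ≤ u ∧ ∀ x : G, ∃ n : ℕ, x ≤ n • u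

/-- The operation `x ⊕ y := (x + y) ⊓ u` of the pseudo MV-algebra `Γ(G,u)`. -/
def oplus (u x y : G) : G := (x + y) ⊓ u

/-- The operation `x ⊙ y := (x - u + y) ⊔ 0` of the pseudo MV-algebra `Γ(G,u)`. -/
def odot (u x y : G) : G := (x - u + y) ⊔ 0

/-- `n.x := x ⊕ ⋯ ⊕ x` (`n` summands), with `0.x = 0`. -/
def nOplus (u : G) : ℕ → G → G
  | 0, _ => 0
  | n + 1, x => oplus u (nOplus u n x) x

/-- `I` is an ideal of the pseudo MV-algebra with carrier `C ⊆ Γ(G,u)`: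
a nonempty subset of `C`, downward closed within `C`, and closed under `⊕`. -/
def IsIdealIn (u : G) (C I : Set G) : Prop :=
  I ⊆ C ∧ I.Nonempty ∧ (∀ x ∈ I, ∀ y ∈ C, y ≤ x → y ∈ I) ∧
    ∀ x ∈ I, ∀ y ∈ I, oplus u x y ∈ I

/-- `I` is a normal ideal: `x ⊕ I = I ⊕ x` for all `x ∈ C`. -/
def IsNormalIdealIn (u : G) (C I : Set G) : Prop :=
  IsIdealIn u C I ∧ ∀ x ∈ C, (fun i => oplus u x i) '' I = (fun i => oplus u i x) '' I

/-- `⟨X⟩_n`, the smallest normal ideal (of the carrier `C`) containing `X`. -/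
def normalGenIn (u : G) (C X : Set G) : Set G :=
  ⋂₀ {I | IsNormalIdealIn u C I ∧ X ⊆ I}

/-- The polar `X^⊥ = {y ∈ C : y ∧ x = 0 for all x ∈ X}` computed in carrier `C`. -/
def polarIn (C X : Set G) : Set G := {y ∈ C | ∀ x ∈ X, y ⊓ x = 0}

/-- `A ⊕ B := {a ⊕ b : a ∈ A, b ∈ B}`. -/
def setOplus (u : G) (A B : Set G) : Set G := Set.image2 (oplus u) A B

/-- `↓a` computed within the carrier `C`. -/
def dsetIn (C : Set G) (a : G) : Set G := {x ∈ C | x ≤ a}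

/-- `I` is a summand-ideal of the carrier `C`: a normal ideal such that for
some normal ideal `J`, `I ∩ J = {0}` and `⟨I ∪ J⟩_n = C`. -/
def IsSummandIdealIn (u : G) (C I : Set G) : Prop :=
  IsNormalIdealIn u C I ∧ ∃ J, IsNormalIdealIn u C J ∧ I ∩ J = {0} ∧
    normalGenIn u C (I ∪ J) = C

/-- `I` is a polar ideal of the carrier `C`: `I = I^⊥⊥`. -/
def IsPolarIdealIn (C I : Set G) : Prop := polarIn C (polarIn C I) = I

/-- `a` is a Boolean element of the carrier `C`: `a ∈ C` and `a ⊕ a = a`. -/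
def IsBooleanIn (u : G) (C : Set G) (a : G) : Prop := a ∈ C ∧ oplus u a a = a

/-- The carrier `C` is strongly projectable: every polar ideal is a summand-ideal. -/
def IsStronglyProjectableIn (u : G) (C : Set G) : Prop :=
  ∀ I : Set G, IsPolarIdealIn C I → IsSummandIdealIn u C I

/-- `N` is a subalgebra of `Γ(G,u)`: contains `0` and `u`, closed under `⊕`,
`x⁻ = u - x` and `x∼ = -x + u`. -/
def IsSubalg (u : G) (N : Set G) : Prop :=
  N ⊆ Set.Icc 0 u ∧ 0 ∈ N ∧ u ∈ N ∧
    (∀ x ∈ N, ∀ y ∈ N, oplus u x y ∈ N) ∧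
    (∀ x ∈ N, u - x ∈ N) ∧ (∀ x ∈ N, -x + u ∈ N)

/-- `N` is a large subalgebra of `Γ(G,u)`: for every nonzero `y ∈ Γ(G,u)` there
are `n ∈ ℕ` and a nonzero `x ∈ N` with `x ≤ n.y`. -/
def IsLargeSubalg (u : G) (N : Set G) : Prop :=
  IsSubalg u N ∧ ∀ y ∈ Set.Icc (0 : G) u, y ≠ 0 →
    ∃ n : ℕ, ∃ x ∈ N, x ≠ 0 ∧ x ≤ nOplus u n y

/-! In any subalgebra `N` containing the large subalgebra `A`, polars of `B = Γ(G,u)` restrict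
faithfully: `(Y ∩ N)^⊥ = Y^⊥` for every polar `Y` of `B`, since a nonzero meet `y ∧ z` would
dominate, up to some `n.`, a nonzero element of `A`. Hence a polar `I` of `M` is `P ∩ M` for the
polar `P = I^⊥⊥` of `B`, and `P ∩ N` is a polar of every `N` in the family. Splitting `N` along
`P ∩ N` produces `e ∈ P ∩ N` with `-e + u ⊥ P`; such an `e` is the greatest element of `P`, so it
is the same for every `N` and lies in `M`. Then `P ∩ M` and `I^⊥ ∩ M` split `M`, because every
`z ∈ M` lies below `(z ∧ e) ⊕ (z ∧ (-e + u))`. -/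

variable {α : Type*} [Lattice α] [AddGroup α] {u : α}

theorem oplus_le_top {x y : α} : oplus u x y ≤ u := inf_le_right

theorem oplus_le_add {x y : α} : oplus u x y ≤ x + y := inf_le_left

theorem oplus_nonneg [AddLeftMono α] (hu : 0 ≤ u) {x y : α} (hx : 0 ≤ x) (hy : 0 ≤ y) :
    0 ≤ oplus u x y :=
  le_inf (add_nonneg hx hy) hu

theorem le_oplus_left [AddLeftMono α] {x y : α} (hy : 0 ≤ y) (hx : x ≤ u) : x ≤ oplus u x y :=
  le_inf (le_add_of_nonneg_right hy) hx

theorem le_oplus_right [AddRightMono α] {x y : α} (hy : 0 ≤ y) (hx : x ≤ u) :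
    x ≤ oplus u y x :=
  le_inf (le_add_of_nonneg_left hy) hx

theorem oplus_sub_sup_zero [AddRightMono α] {x z : α} (hxz : x ≤ z) (hz : z ≤ u) :
    oplus u ((z - x) ⊔ 0) x = z := by
  rw [oplus, sup_add, sub_add_cancel, zero_add, sup_eq_left.mpr hxz, inf_eq_left.mpr hz]

theorem oplus_neg_add_sup_zero [AddLeftMono α] {x z : α} (hxz : x ≤ z) (hz : z ≤ u) :
    oplus u x ((-x + z) ⊔ 0) = z := by
  rw [oplus, add_sup, add_neg_cancel_left, add_zero, sup_eq_left.mpr hxz, inf_eq_left.mpr hz]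

theorem oplus_sub_sup_zero_le [AddRightMono α] {p x : α} (hp : 0 ≤ p) :
    (oplus u p x - x) ⊔ 0 ≤ p := by
  rw [oplus, sub_eq_add_neg, inf_add, add_neg_cancel_right]
  exact sup_le inf_le_left hp

theorem neg_add_oplus_sup_zero_le [AddLeftMono α] {q x : α} (hq : 0 ≤ q) :
    (-x + oplus u x q) ⊔ 0 ≤ q := by
  rw [oplus, add_inf, neg_add_cancel_left]
  exact sup_le inf_le_left hq

theorem nOplus_nonneg [AddLeftMono α] (hu : 0 ≤ u) {y : α} (hy : 0 ≤ y) : ∀ n, 0 ≤ nOplus u n y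
  | 0 => le_rfl
  | n + 1 => oplus_nonneg hu (nOplus_nonneg hu hy n) hy

namespace IsSubalg

variable {N : Set α}

theorem subset (hN : IsSubalg u N) : N ⊆ Set.Icc 0 u := hN.1

theorem zero_mem (hN : IsSubalg u N) : (0 : α) ∈ N := hN.2.1

theorem top_mem (hN : IsSubalg u N) : u ∈ N := hN.2.2.1

theorem top_nonneg (hN : IsSubalg u N) : 0 ≤ u := (hN.subset hN.top_mem).1

theorem oplus_mem (hN : IsSubalg u N) {x y : α} (hx : x ∈ N) (hy : y ∈ N) :
    oplus u x y ∈ N :=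
  hN.2.2.2.1 x hx y hy

theorem sub_mem (hN : IsSubalg u N) {x : α} (hx : x ∈ N) : u - x ∈ N := hN.2.2.2.2.1 x hx

theorem neg_add_mem (hN : IsSubalg u N) {x : α} (hx : x ∈ N) : -x + u ∈ N :=
  hN.2.2.2.2.2 x hx

theorem sInter {S : Set (Set α)} (hS : ∀ N ∈ S, IsSubalg u N) (hne : S.Nonempty) :
    IsSubalg u (⋂₀ S) := by
  obtain ⟨N₀, hN₀⟩ := hne
  refine ⟨(Set.sInter_subset_of_mem hN₀).trans (hS N₀ hN₀).subset,
    Set.mem_sInter.2 fun N hN => (hS N hN).zero_mem,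
    Set.mem_sInter.2 fun N hN => (hS N hN).top_mem, ?_, ?_, ?_⟩
  · exact fun x hx y hy => Set.mem_sInter.2 fun N hN =>
      (hS N hN).oplus_mem (Set.mem_sInter.1 hx N hN) (Set.mem_sInter.1 hy N hN)
  · exact fun x hx => Set.mem_sInter.2 fun N hN => (hS N hN).sub_mem (Set.mem_sInter.1 hx N hN)
  · exact fun x hx => Set.mem_sInter.2 fun N hN =>
      (hS N hN).neg_add_mem (Set.mem_sInter.1 hx N hN)

end IsSubalg

namespace IsIdealIn

variable {C I : Set α}

theorem subset (hI : IsIdealIn u C I) : I ⊆ C := hI.1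

theorem mem_of_le (hI : IsIdealIn u C I) {x y : α} (hx : x ∈ I) (hy : y ∈ C) (hyx : y ≤ x) :
    y ∈ I :=
  hI.2.2.1 x hx y hy hyx

theorem oplus_mem (hI : IsIdealIn u C I) {x y : α} (hx : x ∈ I) (hy : y ∈ I) :
    oplus u x y ∈ I :=
  hI.2.2.2 x hx y hy

theorem zero_mem (hI : IsIdealIn u C I) (hC : IsSubalg u C) : (0 : α) ∈ I := by
  obtain ⟨x, hx⟩ := hI.2.1
  exact hI.mem_of_le hx hC.zero_mem (hC.subset (hI.subset hx)).1

end IsIdealIn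

namespace IsNormalIdealIn

variable {C I : Set α}

theorem exists_oplus_eq_left (hI : IsNormalIdealIn u C I) {x i : α} (hx : x ∈ C) (hi : i ∈ I) :
    ∃ j ∈ I, oplus u j x = oplus u x i := by
  rw [← Set.mem_image, ← hI.2 x hx]
  exact Set.mem_image_of_mem _ hi

theorem exists_oplus_eq_right (hI : IsNormalIdealIn u C I) {x i : α} (hx : x ∈ C) (hi : i ∈ I) :
    ∃ j ∈ I, oplus u x j = oplus u i x := by
  rw [← Set.mem_image, hI.2 x hx]
  exact Set.mem_image_of_mem _ hi

end IsNormalIdealIn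

section Polar

variable {C N X Y : Set α}

theorem polarIn_subset : polarIn C X ⊆ C := fun _ h => h.1

theorem polarIn_anti (h : X ⊆ Y) : polarIn C Y ⊆ polarIn C X :=
  fun _ hy => ⟨hy.1, fun x hx => hy.2 x (h hx)⟩

theorem subset_polarIn_polarIn (hX : X ⊆ C) : X ⊆ polarIn C (polarIn C X) :=
  fun x hx => ⟨hX hx, fun y hy => by rw [inf_comm]; exact hy.2 x hx⟩

theorem isPolarIdealIn_polarIn (hX : X ⊆ C) : IsPolarIdealIn C (polarIn C X) :=
  subset_antisymm (polarIn_anti (subset_polarIn_polarIn hX))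
    (subset_polarIn_polarIn polarIn_subset)

theorem IsPolarIdealIn.subset (hY : IsPolarIdealIn C Y) : Y ⊆ C := hY ▸ polarIn_subset

theorem polarIn_of_subset (hN : N ⊆ C) : polarIn N X = polarIn C X ∩ N :=
  Set.ext fun _ => ⟨fun h => ⟨⟨hN h.1, h.2⟩, h.1⟩, fun h => ⟨h.2, h.1.2⟩⟩

theorem inter_polarIn_eq_singleton_zero (hX0 : 0 ∈ X) (hC0 : 0 ∈ C) (hX : ∀ x ∈ X, 0 ≤ x) :
    X ∩ polarIn C X = {0} := by
  refine Set.eq_singleton_iff_unique_mem.2 ⟨⟨hX0, hC0, fun x hx => inf_eq_left.2 (hX x hx)⟩, ?_⟩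
  rintro x ⟨hx, -, hxx⟩
  simpa using hxx x hx

end Polar

section LatticeOrderedGroup

variable [AddLeftMono α] [AddRightMono α]

theorem sup_eq_add_neg_inf_add (a b : α) : a ⊔ b = a + -(a ⊓ b) + b := by
  rw [neg_inf, add_sup, sup_add, add_neg_cancel, zero_add, neg_add_cancel_right, sup_comm]

theorem add_comm_of_inf_eq_zero {a b : α} (h : a ⊓ b = 0) : a + b = b + a := by
  have hab := sup_eq_add_neg_inf_add a b
  have hba := sup_eq_add_neg_inf_add b a
  rw [h, neg_zero, add_zero] at hab
  rw [inf_comm, h, neg_zero, add_zero] at hba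
  rw [← hab, ← hba, sup_comm]

theorem inf_add_le_add_inf {a b c : α} (ha : 0 ≤ a) (hb : 0 ≤ b) (hc : 0 ≤ c) :
    a ⊓ (b + c) ≤ a ⊓ b + a ⊓ c := by
  rw [inf_add, add_inf, add_inf]
  refine le_inf (le_inf ?_ ?_) (le_inf ?_ ?_)
  · exact inf_le_left.trans (le_add_of_nonneg_right ha)
  · exact inf_le_left.trans (le_add_of_nonneg_right hc)
  · exact inf_le_left.trans (le_add_of_nonneg_left hb)
  · exact inf_le_right

theorem inf_add_eq_zero {a b c : α} (ha : 0 ≤ a) (hb : 0 ≤ b) (hc : 0 ≤ c)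
    (hab : a ⊓ b = 0) (hac : a ⊓ c = 0) : a ⊓ (b + c) = 0 :=
  le_antisymm (by simpa [hab, hac] using inf_add_le_add_inf ha hb hc)
    (le_inf ha (add_nonneg hb hc))

theorem oplus_le_oplus {x x' y y' : α} (hx : x ≤ x') (hy : y ≤ y') :
    oplus u x y ≤ oplus u x' y' :=
  inf_le_inf_right u (add_le_add hx hy)

theorem oplus_assoc {x y z : α} (hx : 0 ≤ x) (hz : 0 ≤ z) :
    oplus u (oplus u x y) z = oplus u x (oplus u y z) := by
  unfold oplus
  rw [inf_add, add_inf, inf_assoc, inf_assoc, inf_eq_right.mpr (le_add_of_nonneg_right hz),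
    inf_eq_right.mpr (le_add_of_nonneg_left hx), add_assoc]

theorem add_inf_le_oplus (hu : 0 ≤ u) {a b : α} (ha : 0 ≤ a) (hb : 0 ≤ b) :
    (a + b) ⊓ u ≤ oplus u (a ⊓ u) (b ⊓ u) := by
  refine le_inf ?_ inf_le_right
  rw [inf_add, add_inf, add_inf]
  refine le_inf (le_inf inf_le_left ?_) (le_inf ?_ ?_)
  · exact inf_le_right.trans (le_add_of_nonneg_left ha)
  · exact inf_le_right.trans (le_add_of_nonneg_right hb)
  · exact inf_le_right.trans (le_add_of_nonneg_right hu)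

/-- The interchange law needs `f₁ + e₂ = e₂ + f₁`, which disjointness provides. -/
theorem oplus_oplus_le_of_inf_eq_zero (hu : 0 ≤ u) {e₁ f₁ e₂ f₂ : α}
    (he₁ : 0 ≤ e₁) (hf₁ : 0 ≤ f₁) (he₂ : 0 ≤ e₂) (hf₂ : 0 ≤ f₂) (hd : f₁ ⊓ e₂ = 0) :
    oplus u (oplus u e₁ f₁) (oplus u e₂ f₂) ≤ oplus u (oplus u e₁ e₂) (oplus u f₁ f₂) :=
  calc oplus u (oplus u e₁ f₁) (oplus u e₂ f₂)
      ≤ (e₁ + f₁ + (e₂ + f₂)) ⊓ u := inf_le_inf_right u (add_le_add oplus_le_add oplus_le_add)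
    _ = (e₁ + e₂ + (f₁ + f₂)) ⊓ u := by
        rw [add_assoc, ← add_assoc f₁, add_comm_of_inf_eq_zero hd, add_assoc, ← add_assoc]
    _ ≤ oplus u (oplus u e₁ e₂) (oplus u f₁ f₂) :=
        add_inf_le_oplus hu (add_nonneg he₁ he₂) (add_nonneg hf₁ hf₂)

theorem nOplus_mono {y z : α} (h : y ≤ z) : ∀ n, nOplus u n y ≤ nOplus u n z
  | 0 => le_rfl
  | n + 1 => oplus_le_oplus (nOplus_mono h n) h

theorem inf_nOplus_eq_zero (hu : 0 ≤ u) {a y : α} (ha : 0 ≤ a) (hy : 0 ≤ y)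
    (h : a ⊓ y = 0) : ∀ n, a ⊓ nOplus u n y = 0
  | 0 => inf_eq_right.mpr ha
  | n + 1 => le_antisymm
      ((inf_le_inf_left a oplus_le_add).trans_eq
        (inf_add_eq_zero ha (nOplus_nonneg hu hy n) hy (inf_nOplus_eq_zero hu ha hy h n) h))
      (le_inf ha (nOplus_nonneg hu hy (n + 1)))

namespace IsSubalg

variable {N : Set α}

theorem odot_mem (hN : IsSubalg u N) {x y : α} (hx : x ∈ N) (hy : y ∈ N) : odot u x y ∈ N := by
  have h : odot u x y = -oplus u (u - y) (u - x) + u := by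
    rw [odot, oplus, neg_inf, sup_add, neg_add_cancel]
    congr 1
    simp [sub_eq_add_neg, add_assoc]
  exact h ▸ hN.neg_add_mem (hN.oplus_mem (hN.sub_mem hy) (hN.sub_mem hx))

theorem sup_mem (hN : IsSubalg u N) {x y : α} (hx : x ∈ N) (hy : y ∈ N) : x ⊔ y ∈ N := by
  have h : x ⊔ y = oplus u x (odot u (-x + u) y) := by
    rw [oplus, odot, sub_eq_add_neg, add_neg_cancel_right, add_sup, add_neg_cancel_left,
      add_zero, sup_comm y x, inf_eq_left.mpr (sup_le (hN.subset hx).2 (hN.subset hy).2)]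
  exact h ▸ hN.oplus_mem hx (hN.odot_mem (hN.neg_add_mem hx) hy)

theorem inf_mem (hN : IsSubalg u N) {x y : α} (hx : x ∈ N) (hy : y ∈ N) : x ⊓ y ∈ N := by
  have h : x ⊓ y = -((u - x) ⊔ (u - y)) + u := by
    rw [sub_eq_add_neg, sub_eq_add_neg, ← add_sup, ← neg_inf, neg_add_rev, neg_neg,
      neg_add_cancel_right]
  exact h ▸ hN.neg_add_mem (hN.sup_mem (hN.sub_mem hx) (hN.sub_mem hy))

theorem sub_sup_zero_mem (hN : IsSubalg u N) {x z : α} (hz : z ∈ N) (hx : x ∈ N) :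
    (z - x) ⊔ 0 ∈ N := by
  have h : (z - x) ⊔ 0 = odot u z (u - x) := by simp [odot, sub_eq_add_neg, add_assoc]
  exact h ▸ hN.odot_mem hz (hN.sub_mem hx)

theorem neg_add_sup_zero_mem (hN : IsSubalg u N) {x z : α} (hz : z ∈ N) (hx : x ∈ N) :
    (-x + z) ⊔ 0 ∈ N := by
  have h : (-x + z) ⊔ 0 = odot u (-x + u) z := by simp [odot, sub_eq_add_neg, add_assoc]
  exact h ▸ hN.odot_mem (hN.neg_add_mem hx) hz

end IsSubalg

theorem isSubalg_Icc (hu : 0 ≤ u) : IsSubalg u (Set.Icc 0 u) := by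
  refine ⟨subset_rfl, ⟨le_rfl, hu⟩, ⟨hu, le_rfl⟩, ?_, ?_, ?_⟩
  · exact fun x hx y hy => ⟨oplus_nonneg hu hx.1 hy.1, oplus_le_top⟩
  · exact fun x hx => ⟨sub_nonneg.2 hx.2, sub_le_self u hx.1⟩
  · exact fun x hx =>
      ⟨le_neg_add_iff_le.2 hx.2, neg_add_le_iff_le_add.2 (le_add_of_nonneg_left hx.1)⟩

theorem IsIdealIn.inf_eq_zero_of_inter_eq {C I J : Set α} (hC : IsSubalg u C)
    (hI : IsIdealIn u C I) (hJ : IsIdealIn u C J) (hIJ : I ∩ J = {0}) {x y : α} (hx : x ∈ I)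
    (hy : y ∈ J) :
    x ⊓ y = 0 := by
  have hxy : x ⊓ y ∈ C := hC.inf_mem (hI.subset hx) (hJ.subset hy)
  have : x ⊓ y ∈ I ∩ J := ⟨hI.mem_of_le hx hxy inf_le_left, hJ.mem_of_le hy hxy inf_le_right⟩
  rwa [hIJ] at this

/-- The residuals `(x ⊕ d - x) ∨ 0` and `(-x + d ⊕ x) ∨ 0` turn the inequalities into exact
witnesses. -/
theorem isNormalIdealIn_of_le {N D : Set α} (hN : IsSubalg u N) (hD : IsIdealIn u N D)
    (hleft : ∀ x ∈ N, ∀ d ∈ D, ∃ p, 0 ≤ p ∧ oplus u x d ≤ oplus u p x ∧ dsetIn N p ⊆ D)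
    (hright : ∀ x ∈ N, ∀ d ∈ D, ∃ p, 0 ≤ p ∧ oplus u d x ≤ oplus u x p ∧ dsetIn N p ⊆ D) :
    IsNormalIdealIn u N D := by
  refine ⟨hD, fun x hx => Set.ext fun w => ⟨?_, ?_⟩⟩
  · rintro ⟨d, hd, rfl⟩
    obtain ⟨p, hp, hle, hpD⟩ := hleft x hx d hd
    have hdN := hD.subset hd
    refine ⟨(oplus u x d - x) ⊔ 0, hpD ⟨hN.sub_sup_zero_mem (hN.oplus_mem hx hdN) hx, ?_⟩,
      oplus_sub_sup_zero (le_oplus_left (hN.subset hdN).1 (hN.subset hx).2) oplus_le_top⟩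
    exact (sup_le_sup_right (sub_le_sub_right hle x) 0).trans (oplus_sub_sup_zero_le hp)
  · rintro ⟨d, hd, rfl⟩
    obtain ⟨p, hp, hle, hpD⟩ := hright x hx d hd
    have hdN := hD.subset hd
    refine ⟨(-x + oplus u d x) ⊔ 0, hpD ⟨hN.neg_add_sup_zero_mem (hN.oplus_mem hdN hx) hx, ?_⟩,
      oplus_neg_add_sup_zero (le_oplus_right (hN.subset hdN).1 (hN.subset hx).2) oplus_le_top⟩
    exact (sup_le_sup_right (add_le_add_right hle (-x)) 0).trans (neg_add_oplus_sup_zero_le hp)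

theorem IsSubalg.isNormalIdealIn_self {N : Set α} (hN : IsSubalg u N) :
    IsNormalIdealIn u N N := by
  refine isNormalIdealIn_of_le hN ⟨subset_rfl, ⟨0, hN.zero_mem⟩, fun _ _ y hy _ => hy,
    fun x hx y hy => hN.oplus_mem hx hy⟩ ?_ ?_
  · exact fun x hx d hd => ⟨oplus u x d, (hN.subset (hN.oplus_mem hx hd)).1,
      le_oplus_left (hN.subset hx).1 oplus_le_top, fun y hy => hy.1⟩
  · exact fun x hx d hd => ⟨oplus u d x, (hN.subset (hN.oplus_mem hd hx)).1,
      le_oplus_right (hN.subset hx).1 oplus_le_top, fun y hy => hy.1⟩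

theorem IsNormalIdealIn.inter {N P : Set α} (hP : IsNormalIdealIn u (Set.Icc 0 u) P)
    (hN : IsSubalg u N) : IsNormalIdealIn u N (P ∩ N) := by
  have hPB : P ⊆ Set.Icc 0 u := hP.1.subset
  have hP0 : (0 : α) ∈ P := hP.1.zero_mem (isSubalg_Icc hN.top_nonneg)
  have hdown : ∀ p ∈ P, dsetIn N p ⊆ P ∩ N :=
    fun p hp y hy => ⟨hP.1.mem_of_le hp (hN.subset hy.1) hy.2, hy.1⟩
  refine isNormalIdealIn_of_le hN ⟨Set.inter_subset_right, ⟨0, hP0, hN.zero_mem⟩, ?_, ?_⟩ ?_ ?_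
  · exact fun x hx y hy hyx => hdown x hx.1 ⟨hy, hyx⟩
  · exact fun x hx y hy => ⟨hP.1.oplus_mem hx.1 hy.1, hN.oplus_mem hx.2 hy.2⟩
  · intro x hx d hd
    obtain ⟨p, hp, hpx⟩ := hP.exists_oplus_eq_left (hN.subset hx) hd.1
    exact ⟨p, (hPB hp).1, hpx.ge, hdown p hp⟩
  · intro x hx d hd
    obtain ⟨p, hp, hpx⟩ := hP.exists_oplus_eq_right (hN.subset hx) hd.1
    exact ⟨p, (hPB hp).1, hpx.ge, hdown p hp⟩

def oplusDownset (u : α) (N I J : Set α) : Set α :=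
  {z ∈ N | ∃ e ∈ I, ∃ f ∈ J, z ≤ oplus u e f}

theorem isIdealIn_oplusDownset {N I J : Set α} (hN : IsSubalg u N) (hI : IsIdealIn u N I)
    (hJ : IsIdealIn u N J) (hIJ : I ∩ J = {0}) : IsIdealIn u N (oplusDownset u N I J) := by
  have hu := hN.top_nonneg
  have hIpos : ∀ e ∈ I, 0 ≤ e := fun e he => (hN.subset (hI.subset he)).1
  have hJpos : ∀ f ∈ J, 0 ≤ f := fun f hf => (hN.subset (hJ.subset hf)).1
  refine ⟨fun z hz => hz.1, ⟨0, hN.zero_mem, 0, hI.zero_mem hN, 0, hJ.zero_mem hN,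
    oplus_nonneg hu le_rfl le_rfl⟩, ?_, ?_⟩
  · rintro x ⟨-, e, he, f, hf, hxef⟩ y hy hyx
    exact ⟨hy, e, he, f, hf, hyx.trans hxef⟩
  · rintro x ⟨hx, e₁, he₁, f₁, hf₁, h₁⟩ y ⟨hy, e₂, he₂, f₂, hf₂, h₂⟩
    refine ⟨hN.oplus_mem hx hy, _, hI.oplus_mem he₁ he₂, _, hJ.oplus_mem hf₁ hf₂, ?_⟩
    have hd : f₁ ⊓ e₂ = 0 := by
      rw [inf_comm]
      exact hI.inf_eq_zero_of_inter_eq hN hJ hIJ he₂ hf₁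
    exact (oplus_le_oplus h₁ h₂).trans <| oplus_oplus_le_of_inf_eq_zero hu (hIpos e₁ he₁)
      (hJpos f₁ hf₁) (hIpos e₂ he₂) (hJpos f₂ hf₂) hd

theorem isNormalIdealIn_oplusDownset {N I J : Set α} (hN : IsSubalg u N)
    (hI : IsNormalIdealIn u N I) (hJ : IsNormalIdealIn u N J) (hIJ : I ∩ J = {0}) :
    IsNormalIdealIn u N (oplusDownset u N I J) := by
  have hu := hN.top_nonneg
  have hIpos : ∀ e ∈ I, 0 ≤ e := fun e he => (hN.subset (hI.1.subset he)).1
  have hJpos : ∀ f ∈ J, 0 ≤ f := fun f hf => (hN.subset (hJ.1.subset hf)).1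
  have hdown : ∀ e ∈ I, ∀ f ∈ J, dsetIn N (oplus u e f) ⊆ oplusDownset u N I J :=
    fun e he f hf y hy => ⟨hy.1, e, he, f, hf, hy.2⟩
  refine isNormalIdealIn_of_le hN (isIdealIn_oplusDownset hN hI.1 hJ.1 hIJ) ?_ ?_
  · rintro x hx z ⟨-, e, he, f, hf, hz⟩
    have hx0 := (hN.subset hx).1
    obtain ⟨e', he', hee'⟩ := hI.exists_oplus_eq_left hx he
    obtain ⟨f', hf', hff'⟩ := hJ.exists_oplus_eq_left hx hf
    refine ⟨oplus u e' f', oplus_nonneg hu (hIpos e' he') (hJpos f' hf'), ?_, hdown e' he' f' hf'⟩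
    calc oplus u x z ≤ oplus u x (oplus u e f) := oplus_le_oplus le_rfl hz
      _ = oplus u (oplus u e' f') x := by
        rw [← oplus_assoc hx0 (hJpos f hf), ← hee', oplus_assoc (hIpos e' he') (hJpos f hf),
          ← hff', ← oplus_assoc (hIpos e' he') hx0]
  · rintro x hx z ⟨-, e, he, f, hf, hz⟩
    have hx0 := (hN.subset hx).1
    obtain ⟨e', he', hee'⟩ := hI.exists_oplus_eq_right hx he
    obtain ⟨f', hf', hff'⟩ := hJ.exists_oplus_eq_right hx hf
    refine ⟨oplus u e' f', oplus_nonneg hu (hIpos e' he') (hJpos f' hf'), ?_, hdown e' he' f' hf'⟩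
    calc oplus u z x ≤ oplus u (oplus u e f) x := oplus_le_oplus hz le_rfl
      _ = oplus u x (oplus u e' f') := by
        rw [oplus_assoc (hIpos e he) hx0, ← hff', ← oplus_assoc (hIpos e he) (hJpos f' hf'),
          ← hee', oplus_assoc hx0 (hJpos f' hf')]

/-- `oplusDownset u N I J` is a normal ideal containing `I ∪ J`, hence contains
`⟨I ∪ J⟩ = N ∋ u`. -/
theorem exists_le_add_of_normalGenIn_eq {N I J : Set α} (hN : IsSubalg u N)
    (hI : IsNormalIdealIn u N I) (hJ : IsNormalIdealIn u N J) (hIJ : I ∩ J = {0})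
    (hgen : normalGenIn u N (I ∪ J) = N) : ∃ e ∈ I, ∃ f ∈ J, u ≤ e + f := by
  have hsub : I ∪ J ⊆ oplusDownset u N I J := by
    rintro z (hz | hz)
    · have hzN := hI.1.subset hz
      exact ⟨hzN, z, hz, 0, hJ.1.zero_mem hN, le_oplus_left le_rfl (hN.subset hzN).2⟩
    · have hzN := hJ.1.subset hz
      exact ⟨hzN, 0, hI.1.zero_mem hN, z, hz, le_oplus_right le_rfl (hN.subset hzN).2⟩
  have hgen_sub : normalGenIn u N (I ∪ J) ⊆ oplusDownset u N I J :=
    Set.sInter_subset_of_mem ⟨isNormalIdealIn_oplusDownset hN hI hJ hIJ, hsub⟩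
  rw [hgen] at hgen_sub
  obtain ⟨-, e, he, f, hf, hle⟩ := hgen_sub hN.top_mem
  exact ⟨e, he, f, hf, hle.trans oplus_le_add⟩

theorem normalGenIn_union_eq_self {N I J : Set α} (hN : IsSubalg u N) (hI : IsIdealIn u N I)
    (hJ : IsIdealIn u N J) {e : α} (he : e ∈ I) (he' : -e + u ∈ J) :
    normalGenIn u N (I ∪ J) = N := by
  refine subset_antisymm (Set.sInter_subset_of_mem (t := N)
    ⟨hN.isNormalIdealIn_self, Set.union_subset hI.subset hJ.subset⟩) fun z hz => ?_
  rintro K ⟨hK, hIJK⟩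
  have heN := hI.subset he
  have he'N := hJ.subset he'
  have hze : z ⊓ e ∈ K := hK.1.mem_of_le (hIJK (Or.inl he)) (hN.inf_mem hz heN) inf_le_right
  have hze' : z ⊓ (-e + u) ∈ K :=
    hK.1.mem_of_le (hIJK (Or.inr he')) (hN.inf_mem hz he'N) inf_le_right
  refine hK.1.mem_of_le (hK.1.oplus_mem hze hze') hz (le_inf ?_ (hN.subset hz).2)
  calc z = z ⊓ (e + (-e + u)) := by rw [add_neg_cancel_left, inf_eq_left.2 (hN.subset hz).2]
    _ ≤ z ⊓ e + z ⊓ (-e + u) :=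
      inf_add_le_add_inf (hN.subset hz).1 (hN.subset heN).1 (hN.subset he'N).1

namespace IsLargeSubalg

variable {A N X Y : Set α}

/-- If `y ∧ z ≠ 0`, some nonzero `a ∈ A` lies below `n.(y ∧ z)`; then `a ∈ Y ∩ N`, yet `a` is
disjoint from `n.y ≥ a`. -/
theorem polarIn_inter (hA : IsLargeSubalg u A) (hAN : A ⊆ N)
    (hY : IsPolarIdealIn (Set.Icc 0 u) Y) :
    polarIn (Set.Icc 0 u) (Y ∩ N) = polarIn (Set.Icc 0 u) Y := by
  have hu := hA.1.top_nonneg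
  refine subset_antisymm (fun y hy => ⟨hy.1, fun z hz => ?_⟩)
    (polarIn_anti Set.inter_subset_left)
  by_contra hyz
  have hz0 : 0 ≤ z := (hY.subset hz).1
  obtain ⟨n, a, haA, ha0, han⟩ :=
    hA.2 (y ⊓ z) ⟨le_inf hy.1.1 hz0, inf_le_left.trans hy.1.2⟩ hyz
  have haB := hA.1.subset haA
  have haY : a ∈ Y := by
    rw [← hY]
    refine ⟨haB, fun x hx => le_antisymm ?_ (le_inf haB.1 hx.1.1)⟩
    calc a ⊓ x ≤ x ⊓ nOplus u n z := by
          rw [inf_comm]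
          exact inf_le_inf_left x (han.trans (nOplus_mono inf_le_right n))
      _ = 0 := inf_nOplus_eq_zero hu hx.1.1 hz0 (hx.2 z hz) n
  have hay : a ⊓ nOplus u n y = 0 := by
    refine inf_nOplus_eq_zero hu haB.1 hy.1.1 ?_ n
    rw [inf_comm]
    exact hy.2 a ⟨haY, hAN haA⟩
  exact ha0 (le_antisymm ((le_inf le_rfl (han.trans (nOplus_mono inf_le_left n))).trans
    hay.le) haB.1)

theorem isPolarIdealIn_inter (hA : IsLargeSubalg u A) (hN : IsSubalg u N) (hAN : A ⊆ N)
    (hY : IsPolarIdealIn (Set.Icc 0 u) Y) : IsPolarIdealIn N (Y ∩ N) := by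
  change polarIn N (polarIn N (Y ∩ N)) = Y ∩ N
  rw [polarIn_of_subset hN.subset, polarIn_of_subset hN.subset, hA.polarIn_inter hAN hY,
    hA.polarIn_inter hAN (isPolarIdealIn_polarIn hY.subset), hY]

theorem polarIn_polarIn (hA : IsLargeSubalg u A) (hN : N ⊆ Set.Icc 0 u) (hAN : A ⊆ N)
    (hX : X ⊆ Set.Icc 0 u) :
    polarIn N (polarIn N X) = polarIn (Set.Icc 0 u) (polarIn (Set.Icc 0 u) X) ∩ N := by
  rw [polarIn_of_subset hN, polarIn_of_subset hN,
    hA.polarIn_inter hAN (isPolarIdealIn_polarIn hX)]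

end IsLargeSubalg

theorem isGreatest_of_neg_add_mem_polarIn {P : Set α} (hP : P ⊆ Set.Icc 0 u) {e : α}
    (he : e ∈ P) (he' : -e + u ∈ polarIn (Set.Icc 0 u) P) : IsGreatest P e := by
  refine ⟨he, fun p hp => ?_⟩
  calc p = p ⊓ (e + (-e + u)) := by rw [add_neg_cancel_left, inf_eq_left.2 (hP hp).2]
    _ ≤ p ⊓ e + p ⊓ (-e + u) := inf_add_le_add_inf (hP hp).1 (hP he).1 he'.1.1
    _ = p ⊓ e := by rw [inf_comm p (-e + u), he'.2 p hp, add_zero]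
    _ ≤ e := inf_le_right

theorem IsStronglyProjectableIn.exists_neg_add_mem_polarIn {A N P : Set α}
    (hNsp : IsStronglyProjectableIn u N) (hN : IsSubalg u N) (hA : IsLargeSubalg u A)
    (hAN : A ⊆ N) (hP : IsPolarIdealIn (Set.Icc 0 u) P) :
    ∃ e ∈ P ∩ N, -e + u ∈ polarIn (Set.Icc 0 u) P := by
  obtain ⟨hK, J, hJ, hKJ, hgen⟩ := hNsp _ (hA.isPolarIdealIn_inter hN hAN hP)
  obtain ⟨e, he, f, hf, hef⟩ := exists_le_add_of_normalGenIn_eq hN hK hJ hKJ hgen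
  have he'N : -e + u ∈ N := hN.neg_add_mem he.2
  have he'J : -e + u ∈ J := hJ.1.mem_of_le hf he'N (neg_add_le_iff_le_add.2 hef)
  have he'K : -e + u ∈ polarIn N (P ∩ N) := ⟨he'N, fun k hk => by
    rw [inf_comm]
    exact hK.1.inf_eq_zero_of_inter_eq hN hJ.1 hKJ hk he'J⟩
  rw [polarIn_of_subset hN.subset, hA.polarIn_inter hAN hP] at he'K
  exact ⟨e, he, he'K.1⟩

theorem IsStronglyProjectableIn.mem_of_neg_add_mem_polarIn {A N P : Set α}
    (hNsp : IsStronglyProjectableIn u N) (hN : IsSubalg u N) (hA : IsLargeSubalg u A)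
    (hAN : A ⊆ N) (hP : IsPolarIdealIn (Set.Icc 0 u) P) {e : α} (he : e ∈ P)
    (he' : -e + u ∈ polarIn (Set.Icc 0 u) P) : e ∈ N := by
  obtain ⟨e₁, he₁, he₁'⟩ := hNsp.exists_neg_add_mem_polarIn hN hA hAN hP
  rw [(isGreatest_of_neg_add_mem_polarIn hP.subset he he').unique
    (isGreatest_of_neg_add_mem_polarIn hP.subset he₁.1 he₁')]
  exact he₁.2

theorem isStronglyProjectableIn_sInter {A : Set α} (hA : IsLargeSubalg u A) {S : Set (Set α)}
    (hS : ∀ N ∈ S, IsSubalg u N ∧ IsStronglyProjectableIn u N ∧ A ⊆ N)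
    (hBS : Set.Icc 0 u ∈ S) : IsStronglyProjectableIn u (⋂₀ S) := by
  have hB := (hS _ hBS).2.1
  have hM : IsSubalg u (⋂₀ S) := IsSubalg.sInter (fun N hN => (hS N hN).1) ⟨_, hBS⟩
  have hAM : A ⊆ ⋂₀ S := Set.subset_sInter fun N hN => (hS N hN).2.2
  intro I hI
  have hIB : I ⊆ Set.Icc 0 u := hI.subset.trans hM.subset
  have hP := isPolarIdealIn_polarIn (polarIn_subset (C := Set.Icc 0 u) (X := I))
  have hIP : I = polarIn (Set.Icc 0 u) (polarIn (Set.Icc 0 u) I) ∩ ⋂₀ S :=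
    hI.symm.trans (hA.polarIn_polarIn hM.subset hAM hIB)
  obtain ⟨e, he, he'⟩ := hB.exists_neg_add_mem_polarIn (hS _ hBS).1 hA (hS _ hBS).2.2 hP
  have heM : e ∈ ⋂₀ S := Set.mem_sInter.2 fun N hN =>
    (hS N hN).2.1.mem_of_neg_add_mem_polarIn (hS N hN).1 hA (hS N hN).2.2 hP he.1 he'
  have hInormal : IsNormalIdealIn u (⋂₀ S) I := hIP ▸ (hB _ hP).1.inter hM
  have hJnormal : IsNormalIdealIn u (⋂₀ S) (polarIn (⋂₀ S) I) := by
    rw [polarIn_of_subset hM.subset]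
    exact (hB _ (isPolarIdealIn_polarIn hIB)).1.inter hM
  have heI : e ∈ I := hIP ▸ ⟨he.1, heM⟩
  have he'I : -e + u ∈ polarIn (⋂₀ S) I :=
    ⟨hM.neg_add_mem heM, fun i hi => he'.2 i (hIP ▸ hi).1⟩
  exact ⟨hInormal, polarIn (⋂₀ S) I, hJnormal,
    inter_polarIn_eq_singleton_zero (hInormal.1.zero_mem hM) hM.zero_mem (fun x hx => (hIB hx).1),
    normalGenIn_union_eq_self hM hInormal.1 hJnormal.1 heI he'I⟩

end LatticeOrderedGroup

theorem stmt18 (u : G) (hu : IsStrongUnit u) (A : Set G)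
    (hA : IsLargeSubalg u A)
    (hB : IsStronglyProjectableIn u (Set.Icc (0 : G) u)) :
    IsSubalg u
        (⋂₀ {N : Set G | IsSubalg u N ∧ IsStronglyProjectableIn u N ∧ A ⊆ N}) ∧
      IsStronglyProjectableIn u
        (⋂₀ {N : Set G | IsSubalg u N ∧ IsStronglyProjectableIn u N ∧ A ⊆ N}) ∧
      A ⊆ ⋂₀ {N : Set G | IsSubalg u N ∧ IsStronglyProjectableIn u N ∧ A ⊆ N} := by
  have hBS : Set.Icc 0 u ∈ {N : Set G | IsSubalg u N ∧ IsStronglyProjectableIn u N ∧ A ⊆ N} :=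
    ⟨isSubalg_Icc hu.1, hB, hA.1.subset⟩
  exact ⟨IsSubalg.sInter (fun N hN => hN.1) ⟨_, hBS⟩,
    isStronglyProjectableIn_sInter hA (fun N hN => hN) hBS,
    Set.subset_sInter fun N hN => hN.2.2⟩
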